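/- arXiv:2505.17953 — 3 statements merged into one kernel-verified Lean document; each statement's English description precedes it below -/
import Mathlib

section
/- Let R be a principal ideal domain with fraction field K, and let M be a finitely generated R-module. If there exists r ∈ ℕ such that dim_K(K ⊗_R M) = r and dim_{R/m}(M/mM) = r for every maximal ideal m ⊆ R, then M is a free R-module of rank r. -/
/-!
Write `T` for the torsion submodule of `M`. Over a PID the quotient `M ⧸ T` is free, so
`M ≅ T × M ⧸ T`, and for every field `k` over `R` the dimension of `k ⊗ M` is
`dim (k ⊗ T) + rank (M ⧸ T)`. Since `T` has rank `0`, the generic fibre gives `rank (M ⧸ T) = r`;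
the hypothesis at a maximal ideal `m` then forces `T / mT = 0`, and by Nakayama `T = 0`.
-/

open Module Submodule TensorProduct

theorem subsingleton_of_forall_subsingleton_quotient_tensor (R : Type*) {N : Type*} [CommRing R]
    [AddCommGroup N] [Module R N] [Module.Finite R N]
    (h : ∀ m : Ideal R, m.IsMaximal → Subsingleton ((R ⧸ m) ⊗[R] N)) : Subsingleton N := by
  refine (subsingleton_or_nontrivial N).resolve_right fun hN => ?_
  obtain ⟨m, hmax, hann⟩ := Ideal.exists_le_maximal (annihilator R N)
    (annihilator_eq_top_iff.not.mpr (not_subsingleton N))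
  have := h m hmax
  have hsmul : m • (⊤ : Submodule R N) = ⊤ :=
    Submodule.Quotient.subsingleton_iff.mp (quotTensorEquivQuotSMul N m).symm.subsingleton
  obtain ⟨c, hc1, hc0⟩ :=
    exists_sub_one_mem_and_smul_eq_zero_of_fg_of_le_smul m ⊤ Module.Finite.fg_top hsmul.ge
  have hcm : c ∈ m := hann (mem_annihilator.mpr fun x => hc0 x mem_top)
  exact hmax.ne_top ((Ideal.eq_top_iff_one m).mpr (by simpa using m.sub_mem hcm hc1))

section PID

variable {R M : Type*} [CommRing R] [IsDomain R] [IsPrincipalIdealRing R]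
  [AddCommGroup M] [Module R M] [Module.Finite R M]

theorem nonempty_linearEquiv_torsion_prod_quotient_torsion :
    Nonempty (M ≃ₗ[R] torsion R M × (M ⧸ torsion R M)) := by
  obtain ⟨s, hs⟩ :=
    Module.projective_lifting_property _ LinearMap.id (torsion R M).mkQ_surjective
  exact ⟨(lequivProdOfRightSplitExact (torsion R M).injective_subtype
    (by rw [range_subtype, ker_mkQ]) hs).symm⟩

theorem finrank_baseChange_eq_finrank_torsion_add (k : Type*) [Field k] [Algebra R k] :
    finrank k (k ⊗[R] M) =
      finrank k (k ⊗[R] torsion R M) + finrank R (M ⧸ torsion R M) := by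
  obtain ⟨e⟩ := nonempty_linearEquiv_torsion_prod_quotient_torsion (R := R) (M := M)
  rw [(e.baseChange R k _ _ ≪≫ₗ prodRight R k k _ _).finrank_eq, finrank_prod,
    finrank_baseChange (M' := M ⧸ torsion R M)]

end PID

/-- Let `R` be a PID with fraction field `K` and `M` a finitely generated `R`-module.
If there is `r : ℕ` with `dim_K (K ⊗[R] M) = r` and `dim_{R/m} (M/mM) = r` (i.e.
`dim_{R/m} ((R/m) ⊗[R] M) = r`) for every maximal ideal `m ⊆ R`, then `M` is a free
`R`-module of rank `r`. -/
theorem stmt_1 (R : Type*) [CommRing R] [IsDomain R] [IsPrincipalIdealRing R]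
    (M : Type*) [AddCommGroup M] [Module R M] [Module.Finite R M] (r : ℕ)
    (hK : Module.finrank (FractionRing R) (FractionRing R ⊗[R] M) = r)
    (hm : ∀ m : Ideal R, m.IsMaximal →
      Module.finrank (R ⧸ m) ((R ⧸ m) ⊗[R] M) = r) :
    Module.Free R M ∧ Module.finrank R M = r := by
  have hquot : finrank R (M ⧸ torsion R M) = r := by
    have hT := (TensorProduct.isBaseChange R (torsion R M) (FractionRing R)).finrank_eq
    rw [(torsion_isTorsion (R := R) (M := M)).finrank_eq_zero] at hT
    rw [← hK, finrank_baseChange_eq_finrank_torsion_add, hT, zero_add]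
  have : Subsingleton (torsion R M) := by
    refine subsingleton_of_forall_subsingleton_quotient_tensor R fun m hmax => ?_
    let := Ideal.Quotient.field m
    have hdim := hm m hmax
    rw [finrank_baseChange_eq_finrank_torsion_add, hquot, Nat.add_eq_right] at hdim
    exact finrank_zero_iff.mp hdim
  have : IsTorsionFree R M := isTorsionFree_iff_torsion_eq_bot.mpr eq_bot_of_subsingleton
  exact ⟨inferInstance, by rw [← hK, (TensorProduct.isBaseChange R M (FractionRing R)).finrank_eq]⟩
end

section
/- Let R be a principal ideal domain and M a finitely generated R-module whose torsion submodule M_tor is nonzero. Then there exists a maximal ideal m ⊆ R with dim_{R/m}(M/mM) > rank(M), where rank(M) = dim_{Frac(R)}(Frac(R) ⊗_R M). -/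
/-!
Over a PID, `M ≅ M_tor × F` with `F = M / M_tor` free of rank `rank M`, and both base changes
split accordingly. Tensoring with `Frac R` kills the torsion part, so the generic dimension is
`rank F`. Choosing a maximal ideal `m` containing the annihilator of `M_tor ≠ 0`, Nakayama's lemma
gives `M_tor / m M_tor ≠ 0`, so the dimension over `R / m` is `rank F` plus something positive.
-/

open TensorProduct Module

section

variable {R : Type*} [CommRing R]

theorem Submodule.ideal_smul_top_ne_top_of_annihilator_le {N : Type*} [AddCommGroup N]
    [Module R N] [Module.Finite R N] {I : Ideal R} (hI : I ≠ ⊤)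
    (hann : Module.annihilator R N ≤ I) : (I • ⊤ : Submodule R N) ≠ ⊤ := by
  intro htop
  -- Nakayama: some `r ≡ 1 mod I` kills `N`, so `r ∈ I` and hence `1 ∈ I`.
  obtain ⟨r, hr1, hr0⟩ := exists_sub_one_mem_and_smul_eq_zero_of_fg_of_le_smul I ⊤
    Module.Finite.fg_top htop.ge
  have hrI : r ∈ I := hann (Module.mem_annihilator.mpr fun n ↦ hr0 n mem_top)
  exact hI (I.eq_top_of_isUnit_mem (by simpa using I.sub_mem hrI hr1) isUnit_one)

theorem nontrivial_quotient_tensor_of_annihilator_le {N : Type*} [AddCommGroup N]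
    [Module R N] [Module.Finite R N] {I : Ideal R} (hI : I ≠ ⊤)
    (hann : Module.annihilator R N ≤ I) : Nontrivial ((R ⧸ I) ⊗[R] N) :=
  have : Nontrivial (N ⧸ (I • ⊤ : Submodule R N)) := Submodule.Quotient.nontrivial_iff.mpr
    (Submodule.ideal_smul_top_ne_top_of_annihilator_le hI hann)
  (quotTensorEquivQuotSMul N I).toEquiv.nontrivial

theorem subsingleton_tensor_of_isTorsion' {S : Submonoid R} (K : Type*) [CommRing K]
    [Algebra R K] [IsLocalization S K] {N : Type*} [AddCommGroup N] [Module R N]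
    (hN : IsTorsion' N S) : Subsingleton (K ⊗[R] N) := by
  refine subsingleton_of_forall_eq 0 fun z ↦ ?_
  induction z using TensorProduct.induction_on with
  | zero => rfl
  | add x y hx hy => rw [hx, hy, add_zero]
  | tmul x n =>
    obtain ⟨s, hs⟩ := @hN n
    obtain ⟨u, hu⟩ := IsLocalization.map_units K s
    have hx : x = (s : R) • (↑u⁻¹ * x) := by
      rw [Algebra.smul_def, ← hu, ← mul_assoc, Units.mul_inv, one_mul]
    rw [hx, smul_tmul, ← Submonoid.smul_def, hs, tmul_zero]

theorem finrank_baseChange_prod (K : Type*) [Field K] [Algebra R K]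
    (N P : Type*) [AddCommGroup N] [Module R N] [Module.Finite R N]
    [AddCommGroup P] [Module R P] [Module.Finite R P] :
    finrank K (K ⊗[R] (N × P)) = finrank K (K ⊗[R] N) + finrank K (K ⊗[R] P) :=
  (prodRight R K K N P).finrank_eq.trans finrank_prod

theorem Module.nonempty_equiv_torsion_prod_quotient [IsDomain R] [IsPrincipalIdealRing R]
    (M : Type*) [AddCommGroup M] [Module R M] [Module.Finite R M] :
    Nonempty (M ≃ₗ[R] Submodule.torsion R M × (M ⧸ Submodule.torsion R M)) := by
  have : Free R (M ⧸ Submodule.torsion R M) := free_of_finite_type_torsion_free'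
  obtain ⟨f, hf⟩ := projective_lifting_property _ LinearMap.id
    (Submodule.torsion R M).mkQ_surjective
  exact ⟨(lequivProdOfRightSplitExact (Submodule.torsion R M).injective_subtype
    (by rw [Submodule.range_subtype, Submodule.ker_mkQ]) hf).symm⟩

end

/-- Let `R` be a PID and `M` a finitely generated `R`-module whose torsion submodule is
nonzero.  Then there is a maximal ideal `m ⊆ R` with
`dim_{R/m} (M/mM) > rank M`, where `M/mM = (R/m) ⊗[R] M` and
`rank M = dim_{Frac R} (Frac R ⊗[R] M)`. -/
theorem stmt_4 (R : Type*) [CommRing R] [IsDomain R] [IsPrincipalIdealRing R]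
    (M : Type*) [AddCommGroup M] [Module R M] [Module.Finite R M]
    (htor : Submodule.torsion R M ≠ ⊥) :
    ∃ m : Ideal R, m.IsMaximal ∧
      Module.finrank (R ⧸ m) ((R ⧸ m) ⊗[R] M) >
        Module.finrank (FractionRing R) (FractionRing R ⊗[R] M) := by
  obtain ⟨e⟩ := Module.nonempty_equiv_torsion_prod_quotient (R := R) M
  set T := Submodule.torsion R M
  have : Free R (M ⧸ T) := free_of_finite_type_torsion_free'
  obtain ⟨m, hm, hTm⟩ := Ideal.exists_le_maximal _ (Submodule.annihilator_eq_top_iff.not.mpr htor)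
  let := Ideal.Quotient.field m
  have : Nontrivial ((R ⧸ m) ⊗[R] T) := nontrivial_quotient_tensor_of_annihilator_le hm.ne_top hTm
  have : Subsingleton (FractionRing R ⊗[R] T) :=
    subsingleton_tensor_of_isTorsion' (FractionRing R) (Submodule.torsion_isTorsion (M := M))
  refine ⟨m, hm, ?_⟩
  rw [(e.baseChange R (R ⧸ m) _ _).finrank_eq, (e.baseChange R (FractionRing R) _ _).finrank_eq,
    finrank_baseChange_prod, finrank_baseChange_prod,
    finrank_zero_of_subsingleton (M := FractionRing R ⊗[R] T), finrank_baseChange (M' := M ⧸ T),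
    finrank_baseChange (M' := M ⧸ T)]
  have : 0 < finrank (R ⧸ m) ((R ⧸ m) ⊗[R] T) := finrank_pos
  omega
end

section
/- Let R be a principal ideal domain with fraction field K and let M be a finitely generated R-module. Suppose there exists r ∈ ℕ such that for every prime ideal p ⊆ R (including p = 0) the κ(p)-vector space Tor_0^R(κ(p), M) ⊕ Tor_1^R(κ(p), M) satisfies dim_{κ(p)} Tor_0^R(κ(p), M) = r and Tor_1^R(κ(p), M) = 0. Then M is free of rank r. -/
open CategoryTheory TensorProduct

universe u

/-!
By the structure theorem, `M ≃ Rⁿ × ⨁ᵢ R/(pᵢ^eᵢ)` with `pᵢ` irreducible. For a field `L`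
over `R`, `L ⊗ R/(a) ≃ L/(a)L` is `L` or `0` according as `a` maps to zero in `L` or not, so
`dim (L ⊗ M) = n + #{i | pᵢ^eᵢ ↦ 0 in L}`. The generic fibre gives `r = n`, and the fibre at
`(pᵢ)` would have dimension `> n` if `eᵢ ≠ 0`; hence the torsion part vanishes.
-/

open Module Finset DirectSum

section FieldAlgebra

variable {R L : Type*} [CommRing R] [Field L] [Algebra R L]

open Classical in
theorem finrank_tensor_quotient_span_singleton (a : R) :
    finrank L (L ⊗[R] (R ⧸ R ∙ a)) = if algebraMap R L a = 0 then 1 else 0 := by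
  let e := Algebra.TensorProduct.quotIdealMapEquivTensorQuot L (Ideal.span {a})
  rw [← e.toLinearEquiv.finrank_eq, Ideal.map_span, Set.image_singleton]
  split_ifs with ha
  · rw [(Submodule.quotEquivOfEqBot _ (Ideal.span_singleton_eq_bot.mpr ha)).finrank_eq,
      finrank_self]
  · rw [Ideal.span_singleton_eq_top.mpr (Ne.isUnit ha)]
    exact finrank_zero_of_subsingleton

open Classical in
theorem finrank_tensor_free_prod_directSum {ι : Type*} [Fintype ι] (n : ℕ) (a : ι → R) :
    finrank L (L ⊗[R] ((Fin n →₀ R) × ⨁ i, R ⧸ R ∙ a i)) =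
      n + #{i | algebraMap R L (a i) = 0} := by
  have := (algebraMap R L).domain_nontrivial
  rw [(TensorProduct.prodRight R L L _ _).finrank_eq, finrank_prod, finrank_baseChange,
    finrank_finsupp_self, Fintype.card_fin, (TensorProduct.directSumRight R L L _).finrank_eq,
    finrank_directSum]
  simp [finrank_tensor_quotient_span_singleton]

open Classical in
theorem finrank_tensor_eq_add_card_of_equiv {M : Type*} [AddCommGroup M] [Module R M]
    {ι : Type*} [Fintype ι] {n : ℕ} {a : ι → R}
    (e : M ≃ₗ[R] (Fin n →₀ R) × ⨁ i, R ⧸ R ∙ a i) :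
    finrank L (L ⊗[R] M) = n + #{i | algebraMap R L (a i) = 0} := by
  rw [(e.baseChange R L M _).finrank_eq, finrank_tensor_free_prod_directSum]

end FieldAlgebra

theorem algebraMap_fractionRing_quotient_eq_zero_iff {R : Type*} [CommRing R] (p : Ideal R)
    [p.IsPrime] {x : R} : algebraMap R (FractionRing (R ⧸ p)) x = 0 ↔ x ∈ p := by
  rw [IsScalarTower.algebraMap_apply R (R ⧸ p), IsFractionRing.to_map_eq_zero_iff,
    Ideal.Quotient.algebraMap_eq, Ideal.Quotient.eq_zero_iff_mem]

/-- Let `R` be a PID with fraction field `K` and `M` a finitely generated `R`-module.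
Suppose there is `r : ℕ` such that for every prime ideal `p ⊆ R` (including `p = 0`),
with residue field `κ(p) = Frac(R/p)`, one has `dim_{κ(p)} (κ(p) ⊗[R] M) = r`
(this tensor product is `Tor_0^R(κ(p), M)`) and `Tor_1^R(κ(p), M) = 0`.
Then `M` is free of rank `r`. -/
theorem stmt_15 (R : Type u) [CommRing R] [IsDomain R] [IsPrincipalIdealRing R]
    (M : Type u) [AddCommGroup M] [Module R M] [Module.Finite R M] (r : ℕ)
    (h : ∀ (p : Ideal R) (_ : p.IsPrime),
      Module.finrank (FractionRing (R ⧸ p)) (FractionRing (R ⧸ p) ⊗[R] M) = r ∧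
      Subsingleton (((Tor (ModuleCat.{u} R) 1).obj
        (ModuleCat.of R (FractionRing (R ⧸ p)))).obj (ModuleCat.of R M))) :
    Module.Free R M ∧ Module.finrank R M = r := by
  classical
  obtain ⟨n, ι, _, p, hp, e, ⟨eqv⟩⟩ := Module.equiv_free_prod_directSum R M
  have hfiber (P : Ideal R) [P.IsPrime] : r = n + #{i | p i ^ e i ∈ P} := by
    simp_rw [← (h P ‹_›).1, finrank_tensor_eq_add_card_of_equiv eqv,
      algebraMap_fractionRing_quotient_eq_zero_iff]
  have hrn : r = n := by
    simpa [(hp _).ne_zero] using hfiber ⊥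
  have he (i : ι) : e i = 0 := by
    by_contra hei
    have hprime : (Ideal.span {p i}).IsPrime :=
      (Ideal.span_singleton_prime (hp i).ne_zero).mpr (hp i).prime
    have hcard : 0 < #{j | p j ^ e j ∈ Ideal.span {p i}} :=
      card_pos.mpr ⟨i, mem_filter.mpr ⟨mem_univ i,
        Ideal.pow_mem_of_mem _ (Ideal.mem_span_singleton_self _) _ (Nat.pos_of_ne_zero hei)⟩⟩
    have hdim := hfiber (Ideal.span {p i})
    omega
  have (i : ι) : Subsingleton (R ⧸ R ∙ p i ^ e i) := by
    rw [he i, pow_zero, Submodule.Quotient.subsingleton_iff, Ideal.submodule_span_eq,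
      Ideal.span_singleton_one]
  refine ⟨Module.Free.of_equiv eqv.symm, ?_⟩
  rw [eqv.finrank_eq, finrank_prod, finrank_finsupp_self, Fintype.card_fin,
    finrank_zero_of_subsingleton, add_zero, hrn]
end
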